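/- arXiv:1502.00937 — 2 statements merged into one kernel-verified Lean document; each statement's English description precedes it below -/
import Mathlib

section
/- Let n ≥ 2, 0 < δ < 1, and v ∈ C^∞(ℝⁿ). Then ∫_{ℝⁿ} |v(x)|² / (|x|² ⟨x⟩^{1+δ}) dx ≤ (2/δ) ‖v‖²_{Ẋ}, where ⟨x⟩ = (1+|x|²)^{1/2} and ‖v‖²_{Ẋ} = sup_{R>0} R^{-2} ∫_{|x|=R} |v|² dS. -/
open MeasureTheory ENNReal

/-- The surface integral `∫_{{|x| = R}} |v|² dS` on `ℝⁿ`, via polar coordinates and the surface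
measure `volume.toSphere` on the unit sphere. -/
noncomputable def sphereInt (n : ℕ) (v : EuclideanSpace ℝ (Fin n) → ℂ) (R : ℝ) : ℝ≥0∞ :=
  ENNReal.ofReal (R ^ (n - 1)) *
    ∫⁻ ω : Metric.sphere (0 : EuclideanSpace ℝ (Fin n)) 1,
      (‖v (R • (ω : EuclideanSpace ℝ (Fin n)))‖₊ : ℝ≥0∞) ^ 2
      ∂((volume : Measure (EuclideanSpace ℝ (Fin n))).toSphere)

/-- `‖v‖²_{Ẋ} = sup_{R>0} R^{-2} ∫_{{|x|=R}} |v|² dS`. -/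
noncomputable def Xnorm2 (n : ℕ) (v : EuclideanSpace ℝ (Fin n) → ℂ) : ℝ≥0∞ :=
  ⨆ R ∈ Set.Ioi (0 : ℝ), (ENNReal.ofReal (R ^ 2))⁻¹ * sphereInt n v R

lemma oneDim (δ : ℝ) (hδ0 : 0 < δ) (hδ1 : δ < 1) :
    ∫⁻ r in Set.Ioi (0:ℝ), ENNReal.ofReal (1 / Real.sqrt (1 + r ^ 2) ^ (1 + δ))
      ≤ ENNReal.ofReal (2 / δ) := by
  have hsplit : Set.Ioi (0:ℝ) = Set.Ioc 0 1 ∪ Set.Ioi 1 :=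
    (Set.Ioc_union_Ioi_eq_Ioi zero_le_one).symm
  rw [hsplit, lintegral_union measurableSet_Ioi (Set.Ioc_disjoint_Ioi le_rfl)]
  have h1 : ∫⁻ r in Set.Ioc (0:ℝ) 1, ENNReal.ofReal (1 / Real.sqrt (1 + r ^ 2) ^ (1 + δ)) ≤ 1 := by
    calc ∫⁻ r in Set.Ioc (0:ℝ) 1, ENNReal.ofReal (1 / Real.sqrt (1 + r ^ 2) ^ (1 + δ))
        ≤ ∫⁻ _ in Set.Ioc (0:ℝ) 1, 1 := by
          refine setLIntegral_mono measurable_const fun r _ => ?_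
          rw [ENNReal.ofReal_le_one]
          have h1 : (1:ℝ) ≤ Real.sqrt (1 + r ^ 2) :=
            (Real.le_sqrt zero_le_one (by nlinarith)).mpr (by nlinarith)
          have := Real.one_le_rpow h1 (by linarith : (0:ℝ) ≤ 1 + δ)
          rw [div_le_one (by linarith)]
          linarith
      _ = 1 := by simp [Real.volume_Ioc]
  have h2 : ∫⁻ r in Set.Ioi (1:ℝ), ENNReal.ofReal (1 / Real.sqrt (1 + r ^ 2) ^ (1 + δ))
      ≤ ENNReal.ofReal (1 / δ) := by
    calc ∫⁻ r in Set.Ioi (1:ℝ), ENNReal.ofReal (1 / Real.sqrt (1 + r ^ 2) ^ (1 + δ))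
        ≤ ∫⁻ r in Set.Ioi (1:ℝ), ENNReal.ofReal (r ^ (-(1 + δ))) := by
          refine setLIntegral_mono (by measurability) fun r hr => ?_
          have hr1 : (1:ℝ) < r := hr
          have hr0 : (0:ℝ) < r := by linarith
          apply ENNReal.ofReal_le_ofReal
          have hs : r ≤ Real.sqrt (1 + r ^ 2) :=
            (Real.le_sqrt hr0.le (by nlinarith)).mpr (by nlinarith)
          have hpow : r ^ (1 + δ) ≤ Real.sqrt (1 + r ^ 2) ^ (1 + δ) :=
            Real.rpow_le_rpow hr0.le hs (by linarith)
          have hrp : (0:ℝ) < r ^ (1 + δ) := Real.rpow_pos_of_pos hr0 _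
          rw [Real.rpow_neg hr0.le, ← one_div]
          exact one_div_le_one_div_of_le hrp hpow
      _ = ENNReal.ofReal (1 / δ) := by
          rw [← ofReal_integral_eq_lintegral_ofReal
            (integrableOn_Ioi_rpow_of_lt (by linarith) one_pos)]
          · rw [integral_Ioi_rpow_of_lt (by linarith) one_pos]
            norm_num
          · filter_upwards [ae_restrict_mem measurableSet_Ioi] with r hr
            exact (Real.rpow_pos_of_pos (by linarith [Set.mem_Ioi.mp hr]) _).le
  calc _ ≤ 1 + ENNReal.ofReal (1 / δ) := add_le_add h1 h2
    _ = ENNReal.ofReal (1 + 1 / δ) := by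
        rw [ENNReal.ofReal_add zero_le_one (by positivity)]; simp
    _ ≤ ENNReal.ofReal (2 / δ) := by
        apply ENNReal.ofReal_le_ofReal
        have h : 1 + 1 / δ = (δ + 1) / δ := by field_simp
        rw [h, div_le_div_iff₀ hδ0 hδ0]
        nlinarith

lemma polar (n : ℕ) (hn : 0 < n) (f : EuclideanSpace ℝ (Fin n) → ℝ≥0∞) :
    ∫⁻ x, f x
      = ∫⁻ p : Metric.sphere (0 : EuclideanSpace ℝ (Fin n)) 1 × Set.Ioi (0:ℝ),
          f (p.2.1 • (p.1 : EuclideanSpace ℝ (Fin n)))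
        ∂(((volume : Measure (EuclideanSpace ℝ (Fin n))).toSphere).prod
            (Measure.volumeIoiPow (n - 1))) := by
  haveI : Nonempty (Fin n) := ⟨⟨0, hn⟩⟩
  haveI : Nontrivial (EuclideanSpace ℝ (Fin n)) :=
    inferInstanceAs (Nontrivial (PiLp 2 fun _ : Fin n => ℝ))
  calc ∫⁻ x, f x = ∫⁻ x in ({0}ᶜ : Set (EuclideanSpace ℝ (Fin n))), f x := by
        rw [restrict_compl_singleton]
    _ = ∫⁻ x : ({0}ᶜ : Set (EuclideanSpace ℝ (Fin n))), f x.1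
          ∂((volume : Measure (EuclideanSpace ℝ (Fin n))).comap (↑)) :=
        (lintegral_subtype_comap (measurableSet_singleton 0).compl f).symm
    _ = ∫⁻ x : ({0}ᶜ : Set (EuclideanSpace ℝ (Fin n))),
          (fun p : Metric.sphere (0 : EuclideanSpace ℝ (Fin n)) 1 × Set.Ioi (0:ℝ) =>
            f (p.2.1 • (p.1 : EuclideanSpace ℝ (Fin n))))
            (homeomorphUnitSphereProd (EuclideanSpace ℝ (Fin n)) x)
          ∂((volume : Measure (EuclideanSpace ℝ (Fin n))).comap (↑)) := by
        refine lintegral_congr fun x => ?_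
        have hx : (x : EuclideanSpace ℝ (Fin n)) ≠ 0 := x.2
        simp only [homeomorphUnitSphereProd_apply_fst_coe,
          homeomorphUnitSphereProd_apply_snd_coe]
        rw [smul_inv_smul₀ (norm_ne_zero_iff.mpr hx)]
    _ = ∫⁻ p : Metric.sphere (0 : EuclideanSpace ℝ (Fin n)) 1 × Set.Ioi (0:ℝ),
          f (p.2.1 • (p.1 : EuclideanSpace ℝ (Fin n)))
        ∂(((volume : Measure (EuclideanSpace ℝ (Fin n))).toSphere).prod
            (Measure.volumeIoiPow (Module.finrank ℝ (EuclideanSpace ℝ (Fin n)) - 1))) :=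
        (MeasureTheory.Measure.measurePreserving_homeomorphUnitSphereProd
          (volume : Measure (EuclideanSpace ℝ (Fin n)))).lintegral_comp_emb
          (Homeomorph.measurableEmbedding _)
          (fun p : Metric.sphere (0 : EuclideanSpace ℝ (Fin n)) 1 × Set.Ioi (0:ℝ) =>
            f (p.2.1 • (p.1 : EuclideanSpace ℝ (Fin n))))
    _ = _ := by rw [finrank_euclideanSpace_fin]

lemma contSqrtPow {δ : ℝ} (hδ : 0 ≤ 1 + δ) :
    Continuous fun r : ℝ => Real.sqrt (1 + r ^ 2) ^ (1 + δ) :=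
  (Real.continuous_sqrt.comp (by continuity)).rpow_const fun _ => Or.inr hδ

lemma sphere_bound (n : ℕ) (v : EuclideanSpace ℝ (Fin n) → ℂ) {R : ℝ} (hR : 0 < R) :
    (∫⁻ ω : Metric.sphere (0 : EuclideanSpace ℝ (Fin n)) 1,
        (‖v (R • (ω : EuclideanSpace ℝ (Fin n)))‖₊ : ℝ≥0∞) ^ 2
        ∂((volume : Measure (EuclideanSpace ℝ (Fin n))).toSphere))
      ≤ (ENNReal.ofReal (R ^ (n - 1)))⁻¹ * (ENNReal.ofReal (R ^ 2) * Xnorm2 n v) := by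
  have hX : (ENNReal.ofReal (R ^ 2))⁻¹ * sphereInt n v R ≤ Xnorm2 n v :=
    le_iSup₂ (f := fun (R : ℝ) (_ : R ∈ Set.Ioi (0:ℝ)) =>
      (ENNReal.ofReal (R ^ 2))⁻¹ * sphereInt n v R) R hR
  have h2 : sphereInt n v R ≤ ENNReal.ofReal (R ^ 2) * Xnorm2 n v :=
    (ENNReal.inv_mul_le_iff (ENNReal.ofReal_pos.mpr (by positivity : (0:ℝ) < R ^ 2)).ne'
      ENNReal.ofReal_ne_top).mp hX
  have h0 : ENNReal.ofReal (R ^ (n - 1)) ≠ 0 :=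
    (ENNReal.ofReal_pos.mpr (by positivity : (0:ℝ) < R ^ (n - 1))).ne'
  calc (∫⁻ ω : Metric.sphere (0 : EuclideanSpace ℝ (Fin n)) 1,
        (‖v (R • (ω : EuclideanSpace ℝ (Fin n)))‖₊ : ℝ≥0∞) ^ 2
        ∂((volume : Measure (EuclideanSpace ℝ (Fin n))).toSphere))
      = (ENNReal.ofReal (R ^ (n - 1)))⁻¹ * sphereInt n v R := by
        rw [sphereInt, ← mul_assoc, ENNReal.inv_mul_cancel h0 ENNReal.ofReal_ne_top, one_mul]
    _ ≤ _ := mul_le_mul_right h2 _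

/-- For `n ≥ 2`, `0 < δ < 1`, and `v` smooth:
`∫_{ℝⁿ} |v|² / (|x|² ⟨x⟩^{1+δ}) dx ≤ (2/δ) ‖v‖²_{Ẋ}`, where `⟨x⟩ = (1+|x|²)^{1/2}`. -/
theorem stmt_7 (n : ℕ) (hn : 2 ≤ n) (δ : ℝ) (hδ0 : 0 < δ) (hδ1 : δ < 1)
    (v : EuclideanSpace ℝ (Fin n) → ℂ) (hv : ContDiff ℝ (⊤ : ℕ∞) v) :
    ∫⁻ x : EuclideanSpace ℝ (Fin n),
        (‖v x‖₊ : ℝ≥0∞) ^ 2 *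
          ENNReal.ofReal (1 / (‖x‖ ^ 2 * Real.sqrt (1 + ‖x‖ ^ 2) ^ (1 + δ)))
      ≤ ENNReal.ofReal (2 / δ) * Xnorm2 n v := by
  set F : EuclideanSpace ℝ (Fin n) → ℝ≥0∞ := fun x => (‖v x‖₊ : ℝ≥0∞) ^ 2 *
      ENNReal.ofReal (1 / (‖x‖ ^ 2 * Real.sqrt (1 + ‖x‖ ^ 2) ^ (1 + δ))) with hF
  have hpolar := polar n (by omega) (fun x => (‖v x‖₊ : ℝ≥0∞) ^ 2 *
      ENNReal.ofReal (1 / (‖x‖ ^ 2 * Real.sqrt (1 + ‖x‖ ^ 2) ^ (1 + δ))))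
  rw [hpolar]
  have hδ' : (0:ℝ) ≤ 1 + δ := by linarith
  have hFc : Measurable F := by
    rw [hF]
    apply Measurable.fun_mul
    · exact (hv.continuous.nnnorm.measurable).coe_nnreal_ennreal.pow_const 2
    · exact (measurable_const.div ((continuous_norm.pow 2).measurable.mul
        ((contSqrtPow hδ').comp continuous_norm).measurable)).ennreal_ofReal
  have hgm : Measurable fun p : Metric.sphere (0 : EuclideanSpace ℝ (Fin n)) 1 × Set.Ioi (0:ℝ) =>
      F (p.2.1 • (p.1 : EuclideanSpace ℝ (Fin n))) := by
    apply hFc.comp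
    exact ((continuous_subtype_val.comp continuous_snd).smul
      (continuous_subtype_val.comp continuous_fst)).measurable
  rw [lintegral_prod_symm _ hgm.aemeasurable]
  -- inner sphere integral bound
  have inner_bound : ∀ r : Set.Ioi (0:ℝ),
      ∫⁻ ω : Metric.sphere (0 : EuclideanSpace ℝ (Fin n)) 1, F (r.1 • (ω : EuclideanSpace ℝ (Fin n))) ∂((volume : Measure (EuclideanSpace ℝ (Fin n))).toSphere)
        ≤ ENNReal.ofReal (1 / (r.1 ^ 2 * Real.sqrt (1 + r.1 ^ 2) ^ (1 + δ)))
            * ((ENNReal.ofReal (r.1 ^ (n - 1)))⁻¹ * (ENNReal.ofReal (r.1 ^ 2) * Xnorm2 n v)) := by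
    intro r
    have hr : 0 < r.1 := r.2
    have hnorm : ∀ ω : Metric.sphere (0 : EuclideanSpace ℝ (Fin n)) 1, ‖r.1 • (ω : EuclideanSpace ℝ (Fin n))‖ = r.1 := by
      intro ω
      rw [norm_smul, mem_sphere_zero_iff_norm.mp ω.2, Real.norm_eq_abs, abs_of_pos hr, mul_one]
    have heq : ∀ ω : Metric.sphere (0 : EuclideanSpace ℝ (Fin n)) 1, F (r.1 • (ω : EuclideanSpace ℝ (Fin n)))
        = (‖v (r.1 • (ω : EuclideanSpace ℝ (Fin n)))‖₊ : ℝ≥0∞) ^ 2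
          * ENNReal.ofReal (1 / (r.1 ^ 2 * Real.sqrt (1 + r.1 ^ 2) ^ (1 + δ))) := by
      intro ω; simp only [F, hnorm ω]
    calc ∫⁻ ω : Metric.sphere (0 : EuclideanSpace ℝ (Fin n)) 1, F (r.1 • (ω : EuclideanSpace ℝ (Fin n))) ∂((volume : Measure (EuclideanSpace ℝ (Fin n))).toSphere)
        = (∫⁻ ω : Metric.sphere (0 : EuclideanSpace ℝ (Fin n)) 1, (‖v (r.1 • (ω : EuclideanSpace ℝ (Fin n)))‖₊ : ℝ≥0∞) ^ 2
            ∂((volume : Measure (EuclideanSpace ℝ (Fin n))).toSphere))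
            * ENNReal.ofReal (1 / (r.1 ^ 2 * Real.sqrt (1 + r.1 ^ 2) ^ (1 + δ))) := by
          rw [← lintegral_mul_const _ (f := fun ω : Metric.sphere (0 : EuclideanSpace ℝ (Fin n)) 1 =>
              (‖v (r.1 • (ω : EuclideanSpace ℝ (Fin n)))‖₊ : ℝ≥0∞) ^ 2) (by
            exact ((hv.continuous.comp ((continuous_const (y := r.1)).smul
              continuous_subtype_val)).nnnorm.measurable).coe_nnreal_ennreal.pow_const 2)]
          exact lintegral_congr fun ω => heq ω
      _ ≤ _ := by
          rw [mul_comm]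
          exact mul_le_mul_right (sphere_bound n v hr) _
  calc ∫⁻ r : Set.Ioi (0:ℝ), (∫⁻ ω : Metric.sphere (0 : EuclideanSpace ℝ (Fin n)) 1, F (r.1 • (ω : EuclideanSpace ℝ (Fin n)))
          ∂((volume : Measure (EuclideanSpace ℝ (Fin n))).toSphere)) ∂(Measure.volumeIoiPow (n - 1))
      ≤ ∫⁻ r : Set.Ioi (0:ℝ), ENNReal.ofReal (1 / (r.1 ^ 2 * Real.sqrt (1 + r.1 ^ 2) ^ (1 + δ)))
            * ((ENNReal.ofReal (r.1 ^ (n - 1)))⁻¹ * (ENNReal.ofReal (r.1 ^ 2) * Xnorm2 n v))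
          ∂(Measure.volumeIoiPow (n - 1)) := lintegral_mono fun r => inner_bound r
    _ = ∫⁻ r : Set.Ioi (0:ℝ), ENNReal.ofReal (r.1 ^ (n - 1)) *
          (ENNReal.ofReal (1 / (r.1 ^ 2 * Real.sqrt (1 + r.1 ^ 2) ^ (1 + δ)))
            * ((ENNReal.ofReal (r.1 ^ (n - 1)))⁻¹ * (ENNReal.ofReal (r.1 ^ 2) * Xnorm2 n v)))
          ∂(Measure.comap Subtype.val volume) := by
        have hm1 : Measurable fun r : Set.Ioi (0:ℝ) =>
            ENNReal.ofReal (1 / (r.1 ^ 2 * Real.sqrt (1 + r.1 ^ 2) ^ (1 + δ))) :=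
          (measurable_const.div (((measurable_subtype_coe.pow_const 2)).mul
            ((contSqrtPow hδ').measurable.comp measurable_subtype_coe))).ennreal_ofReal
        rw [Measure.volumeIoiPow, lintegral_withDensity_eq_lintegral_mul _
          ((measurable_subtype_coe.pow_const _).ennreal_ofReal)
          (hm1.fun_mul (((measurable_subtype_coe.pow_const _).ennreal_ofReal.fun_inv).fun_mul
            (((measurable_subtype_coe.pow_const 2).ennreal_ofReal).mul_const _)))]
        rfl
    _ = ∫⁻ r : Set.Ioi (0:ℝ), ENNReal.ofReal (1 / Real.sqrt (1 + r.1 ^ 2) ^ (1 + δ)) * Xnorm2 n v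
          ∂(Measure.comap Subtype.val volume) := by
        refine lintegral_congr fun r => ?_
        have hr : 0 < r.1 := r.2
        have h0 : ENNReal.ofReal (r.1 ^ (n - 1)) ≠ 0 := by
          simp only [ne_eq, ENNReal.ofReal_eq_zero, not_le]
          positivity
        have hcancel : ENNReal.ofReal (r.1 ^ (n - 1))
            * (ENNReal.ofReal (r.1 ^ (n - 1)))⁻¹ = 1 := ENNReal.mul_inv_cancel h0 (by simp)
        have hsq : ENNReal.ofReal (1 / (r.1 ^ 2 * Real.sqrt (1 + r.1 ^ 2) ^ (1 + δ)))
            * ENNReal.ofReal (r.1 ^ 2)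
            = ENNReal.ofReal (1 / Real.sqrt (1 + r.1 ^ 2) ^ (1 + δ)) := by
          rw [← ENNReal.ofReal_mul (by positivity)]
          congr 1
          have hs : (0:ℝ) < Real.sqrt (1 + r.1 ^ 2) ^ (1 + δ) :=
            Real.rpow_pos_of_pos (Real.sqrt_pos.mpr (by positivity)) _
          field_simp
        calc ENNReal.ofReal (r.1 ^ (n - 1)) *
              (ENNReal.ofReal (1 / (r.1 ^ 2 * Real.sqrt (1 + r.1 ^ 2) ^ (1 + δ)))
                * ((ENNReal.ofReal (r.1 ^ (n - 1)))⁻¹ * (ENNReal.ofReal (r.1 ^ 2) * Xnorm2 n v)))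
            = (ENNReal.ofReal (r.1 ^ (n - 1)) * (ENNReal.ofReal (r.1 ^ (n - 1)))⁻¹)
              * (ENNReal.ofReal (1 / (r.1 ^ 2 * Real.sqrt (1 + r.1 ^ 2) ^ (1 + δ)))
                * ENNReal.ofReal (r.1 ^ 2)) * Xnorm2 n v := by ring
          _ = _ := by rw [hcancel, hsq, one_mul]
    _ = (∫⁻ r in Set.Ioi (0:ℝ), ENNReal.ofReal (1 / Real.sqrt (1 + r ^ 2) ^ (1 + δ)))
          * Xnorm2 n v := by
        rw [lintegral_mul_const''
          (f := fun r : Set.Ioi (0:ℝ) => ENNReal.ofReal (1 / Real.sqrt (1 + r.1 ^ 2) ^ (1 + δ)))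
          _ (by exact ((measurable_const.div
            ((contSqrtPow hδ').measurable.comp measurable_subtype_coe))).ennreal_ofReal.aemeasurable)]
        exact congrArg (· * Xnorm2 n v) (lintegral_subtype_comap measurableSet_Ioi
          (fun r : ℝ => ENNReal.ofReal (1 / Real.sqrt (1 + r ^ 2) ^ (1 + δ))))
    _ ≤ ENNReal.ofReal (2 / δ) * Xnorm2 n v :=
        mul_le_mul_left (oneDim δ hδ0 hδ1) _
end

section
/- Let n ≥ 2, 0 < δ < 1, and v, w ∈ C^∞(ℝⁿ). Then ∫_{|x|≤1} |v w| / |x|^{2−δ} dx + ∫_{|x|≥1} |v w| / |x|^{2+δ} dx ≤ (9/δ) ‖v‖_{Ẋ} ‖w‖_{Ẏ}. -/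
open MeasureTheory ENNReal

/-- `‖w‖²_{Ẏ} = sup_{R>0} R^{-1} ∫_{{|x| ≤ R}} |w|² dx`. -/
noncomputable def Ynorm2 (n : ℕ) (w : EuclideanSpace ℝ (Fin n) → ℂ) : ℝ≥0∞ :=
  ⨆ R ∈ Set.Ioi (0 : ℝ), (ENNReal.ofReal R)⁻¹ *
    ∫⁻ x in Metric.closedBall (0 : EuclideanSpace ℝ (Fin n)) R, (‖w x‖₊ : ℝ≥0∞) ^ 2

section SKaux
open Set


lemma SK_key_real {δ : ℝ} (h0 : 0 < δ) (h1 : δ < 1) : (2:ℝ) ^ (-δ) + δ / 3 ≤ 1 := by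
  have hc : (0.6931471803:ℝ) < Real.log 2 := Real.log_two_gt_d9
  have h2 : (2:ℝ) ^ (-δ) = Real.exp (-(δ * Real.log 2)) := by
    rw [Real.rpow_def_of_pos (by norm_num : (0:ℝ) < 2)]
    ring_nf
  have h4 : δ * Real.log 2 + 1 ≤ Real.exp (δ * Real.log 2) := Real.add_one_le_exp _
  have h5 : (0:ℝ) < 1 + δ * Real.log 2 := by nlinarith
  have h3 : Real.exp (-(δ * Real.log 2)) ≤ (1 + δ * Real.log 2)⁻¹ := by
    rw [Real.exp_neg, inv_le_inv₀ (Real.exp_pos _) h5]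
    linarith
  have h6 : (1 + δ * Real.log 2)⁻¹ ≤ 1 - δ / 3 := by
    rw [inv_le_iff_one_le_mul₀ h5]
    nlinarith [mul_pos h0 h0, hc, mul_lt_mul_of_pos_left hc h0, mul_le_mul_of_nonneg_left h1.le (le_of_lt (mul_pos h0 (lt_trans (by norm_num) hc)))]
  linarith [h2 ▸ h3.trans h6]

lemma SK_geom_le {δ : ℝ} (h0 : 0 < δ) (h1 : δ < 1) :
    (1 - ENNReal.ofReal ((2:ℝ) ^ (-δ)))⁻¹ ≤ ENNReal.ofReal (3 / δ) := by
  have key := SK_key_real h0 h1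
  have h2 : ENNReal.ofReal (δ / 3) ≤ 1 - ENNReal.ofReal ((2:ℝ) ^ (-δ)) := by
    refine ENNReal.le_sub_of_add_le_right ENNReal.ofReal_ne_top ?_
    rw [← ENNReal.ofReal_one, ← ENNReal.ofReal_add (by positivity) (by positivity)]
    exact ENNReal.ofReal_le_ofReal (by linarith)
  calc (1 - ENNReal.ofReal ((2:ℝ) ^ (-δ)))⁻¹ ≤ (ENNReal.ofReal (δ / 3))⁻¹ :=
        ENNReal.inv_le_inv.mpr h2
    _ = ENNReal.ofReal (3 / δ) := by
        rw [← ENNReal.ofReal_inv_of_pos (by positivity)]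
        norm_num

lemma SK_rpow_pow' (t : ℝ) (m : ℕ) : ((2:ℝ)^m) ^ t = ((2:ℝ)^t) ^ m := by
  rw [← Real.rpow_natCast 2 m, ← Real.rpow_natCast ((2:ℝ)^t) m,
    ← Real.rpow_mul (by norm_num), ← Real.rpow_mul (by norm_num)]
  congr 1
  ring

lemma SK_rpow_pow (t : ℝ) (m : ℕ) : (((2:ℝ)^m)⁻¹) ^ t = ((2:ℝ)^(-t)) ^ m := by
  rw [Real.inv_rpow (by positivity), ← Real.rpow_neg (by positivity), SK_rpow_pow' (-t) m]

lemma SK_small_cover {r : ℝ} (h0 : 0 < r) (h1 : r ≤ 1) :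
    ∃ j : ℕ, ((2:ℝ)^(j+1))⁻¹ < r ∧ r ≤ ((2:ℝ)^j)⁻¹ := by
  have hex : ∃ j : ℕ, ((2:ℝ)^(j+1))⁻¹ < r := by
    obtain ⟨m, hm⟩ := pow_unbounded_of_one_lt r⁻¹ (by norm_num : (1:ℝ) < 2)
    refine ⟨m, ?_⟩
    have h2 : ((2:ℝ)^m)⁻¹ < r := by
      rw [inv_lt_comm₀ (by positivity) h0]
      exact hm
    have : ((2:ℝ)^(m+1))⁻¹ ≤ ((2:ℝ)^m)⁻¹ := by
      apply inv_anti₀ (by positivity)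
      exact pow_le_pow_right₀ (by norm_num) (by omega)
    linarith
  classical
  refine ⟨Nat.find hex, Nat.find_spec hex, ?_⟩
  rcases Nat.eq_zero_or_pos (Nat.find hex) with h | h
  · rw [h]; simpa using h1
  · have := Nat.find_min hex (m := Nat.find hex - 1) (by omega)
    push_neg at this
    have h3 : Nat.find hex - 1 + 1 = Nat.find hex := by omega
    rwa [h3] at this

lemma SK_big_cover {r : ℝ} (h : 1 ≤ r) :
    ∃ j : ℕ, (2:ℝ)^j ≤ r ∧ r < (2:ℝ)^(j+1) := by
  have hex : ∃ j : ℕ, r < (2:ℝ)^(j+1) := by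
    obtain ⟨m, hm⟩ := pow_unbounded_of_one_lt r (by norm_num : (1:ℝ) < 2)
    exact ⟨m, lt_of_lt_of_le hm (pow_le_pow_right₀ (by norm_num) (by omega))⟩
  classical
  refine ⟨Nat.find hex, ?_, Nat.find_spec hex⟩
  rcases Nat.eq_zero_or_pos (Nat.find hex) with h0 | h0
  · rw [h0]; simpa using h
  · have := Nat.find_min hex (m := Nat.find hex - 1) (by omega)
    push_neg at this
    have h3 : Nat.find hex - 1 + 1 = Nat.find hex := by omega
    rwa [h3] at this


lemma SK_int_small {δ : ℝ} (h0 : 0 < δ) (h1 : δ < 1) :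
    ∫⁻ r in Ioc (0:ℝ) 1, ENNReal.ofReal (r ^ (δ-1)) ≤ ENNReal.ofReal (3/δ) := by
  have hsub : Ioc (0:ℝ) 1 ⊆ ⋃ j : ℕ, Ioc ((2:ℝ)^(j+1))⁻¹ ((2:ℝ)^j)⁻¹ := by
    intro r hr
    obtain ⟨j, hj1, hj2⟩ := SK_small_cover hr.1 hr.2
    exact mem_iUnion.mpr ⟨j, hj1, hj2⟩
  refine le_trans (lintegral_mono_set hsub) ?_
  refine le_trans (lintegral_iUnion_le _ _) ?_
  have hterm : ∀ j : ℕ, ∫⁻ r in Ioc ((2:ℝ)^(j+1))⁻¹ ((2:ℝ)^j)⁻¹, ENNReal.ofReal (r ^ (δ-1))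
      ≤ (ENNReal.ofReal ((2:ℝ)^(-δ)))^(j+1) := by
    intro j
    have ha : (0:ℝ) < ((2:ℝ)^(j+1))⁻¹ := by positivity
    have hb : ∫⁻ r in Ioc ((2:ℝ)^(j+1))⁻¹ ((2:ℝ)^j)⁻¹, ENNReal.ofReal (r ^ (δ-1))
        ≤ ∫⁻ _ in Ioc ((2:ℝ)^(j+1))⁻¹ ((2:ℝ)^j)⁻¹,
            ENNReal.ofReal ((((2:ℝ)^(j+1))⁻¹) ^ (δ-1)) := by
      refine setLIntegral_mono measurable_const (fun r hr => ?_)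
      exact ENNReal.ofReal_le_ofReal
        (Real.rpow_le_rpow_of_nonpos ha hr.1.le (by linarith))
    refine hb.trans ?_
    rw [setLIntegral_const, Real.volume_Ioc]
    have hdiff : ((2:ℝ)^j)⁻¹ - ((2:ℝ)^(j+1))⁻¹ = ((2:ℝ)^(j+1))⁻¹ := by
      have h2 : (2:ℝ)^(j+1) = 2 * 2^j := by ring
      rw [h2]
      have : ((2:ℝ)^j) ≠ 0 := by positivity
      field_simp
      ring
    rw [hdiff, ← ENNReal.ofReal_mul (by positivity)]
    have heq : (((2:ℝ)^(j+1))⁻¹) ^ (δ-1) * ((2:ℝ)^(j+1))⁻¹ = ((2:ℝ)^(-δ))^(j+1) := by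
      rw [← SK_rpow_pow δ (j+1)]
      have hne : ((2:ℝ)^(j+1))⁻¹ ≠ 0 := by positivity
      have := Real.rpow_add_one hne (δ - 1)
      rw [show δ - 1 + 1 = δ by ring] at this
      rw [this]
    rw [heq, ENNReal.ofReal_pow (by positivity)]
  refine le_trans (ENNReal.tsum_le_tsum hterm) ?_
  rw [ENNReal.tsum_geometric_add_one]
  calc ENNReal.ofReal ((2:ℝ)^(-δ)) * (1 - ENNReal.ofReal ((2:ℝ)^(-δ)))⁻¹
      ≤ 1 * ENNReal.ofReal (3/δ) := by
        refine mul_le_mul' ?_ (SK_geom_le h0 h1)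
        rw [← ENNReal.ofReal_one]
        exact ENNReal.ofReal_le_ofReal
          (Real.rpow_le_one_of_one_le_of_nonpos (by norm_num) (by linarith))
    _ = ENNReal.ofReal (3/δ) := one_mul _

lemma SK_int_big {δ : ℝ} (h0 : 0 < δ) (h1 : δ < 1) :
    ∫⁻ r in Ici (1:ℝ), ENNReal.ofReal (r ^ (-1-δ)) ≤ ENNReal.ofReal (3/δ) := by
  have hsub : Ici (1:ℝ) ⊆ ⋃ j : ℕ, Ico ((2:ℝ)^j) ((2:ℝ)^(j+1)) := by
    intro r hr
    obtain ⟨j, hj1, hj2⟩ := SK_big_cover hr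
    exact mem_iUnion.mpr ⟨j, hj1, hj2⟩
  refine le_trans (lintegral_mono_set hsub) ?_
  refine le_trans (lintegral_iUnion_le _ _) ?_
  have hterm : ∀ j : ℕ, ∫⁻ r in Ico ((2:ℝ)^j) ((2:ℝ)^(j+1)), ENNReal.ofReal (r ^ (-1-δ))
      ≤ (ENNReal.ofReal ((2:ℝ)^(-δ)))^j := by
    intro j
    have ha : (0:ℝ) < (2:ℝ)^j := by positivity
    have hb : ∫⁻ r in Ico ((2:ℝ)^j) ((2:ℝ)^(j+1)), ENNReal.ofReal (r ^ (-1-δ))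
        ≤ ∫⁻ _ in Ico ((2:ℝ)^j) ((2:ℝ)^(j+1)), ENNReal.ofReal (((2:ℝ)^j) ^ (-1-δ)) := by
      refine setLIntegral_mono measurable_const (fun r hr => ?_)
      exact ENNReal.ofReal_le_ofReal
        (Real.rpow_le_rpow_of_nonpos ha hr.1 (by linarith))
    refine hb.trans ?_
    rw [setLIntegral_const, Real.volume_Ico]
    have hdiff : (2:ℝ)^(j+1) - (2:ℝ)^j = (2:ℝ)^j := by ring
    rw [hdiff, ← ENNReal.ofReal_mul (by positivity)]
    have heq : ((2:ℝ)^j) ^ (-1-δ) * (2:ℝ)^j = ((2:ℝ)^(-δ))^j := by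
      rw [← SK_rpow_pow' (-δ) j]
      have hne : ((2:ℝ)^j) ≠ 0 := by positivity
      have := Real.rpow_add_one hne (-1 - δ)
      rw [show -1 - δ + 1 = -δ by ring] at this
      rw [this]
    rw [heq, ENNReal.ofReal_pow (by positivity)]
  refine le_trans (ENNReal.tsum_le_tsum hterm) ?_
  rw [ENNReal.tsum_geometric]
  exact SK_geom_le h0 h1
lemma SK_polar (n : ℕ) (hn : 1 ≤ n) (v : EuclideanSpace ℝ (Fin n) → ℂ) (hv : Continuous v)
    (φ : ℝ → ℝ≥0∞) (hφ : Measurable φ) :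
    ∫⁻ x : EuclideanSpace ℝ (Fin n), ((‖v x‖₊ : ℝ≥0∞)^2) * φ ‖x‖
      = ∫⁻ r in Set.Ioi (0:ℝ), φ r * sphereInt n v r := by
  have hdim : Module.finrank ℝ (EuclideanSpace ℝ (Fin n)) = n := finrank_euclideanSpace_fin
  haveI : Nontrivial (EuclideanSpace ℝ (Fin n)) := Module.nontrivial_of_finrank_pos (R := ℝ) (by omega : 0 < Module.finrank ℝ (EuclideanSpace ℝ (Fin n)))
  set μ : Measure (EuclideanSpace ℝ (Fin n)) := volume with hμ
  set S : ℝ → ℝ≥0∞ := fun r => ∫⁻ ω : Metric.sphere (0:EuclideanSpace ℝ (Fin n)) 1,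
    ((‖v (r • (ω : EuclideanSpace ℝ (Fin n)))‖₊ : ℝ≥0∞)^2) ∂μ.toSphere with hS
  have hSmeas : Measurable S := by
    apply Measurable.lintegral_prod_right (f := fun (r : ℝ) (ω : Metric.sphere (0:EuclideanSpace ℝ (Fin n)) 1) =>
      ((‖v (r • (ω : EuclideanSpace ℝ (Fin n)))‖₊ : ℝ≥0∞)^2))
    apply Measurable.pow_const
    apply Measurable.coe_nnreal_ennreal
    apply Measurable.nnnorm
    exact (hv.comp (continuous_fst.smul (continuous_subtype_val.comp continuous_snd))).measurable
  set G : Metric.sphere (0:EuclideanSpace ℝ (Fin n)) 1 × Set.Ioi (0:ℝ) → ℝ≥0∞ :=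
    fun p => ((‖v ((p.2 : ℝ) • (p.1 : EuclideanSpace ℝ (Fin n)))‖₊ : ℝ≥0∞)^2) * φ p.2 with hG
  have hGmeas : Measurable G := by
    apply Measurable.mul
    · apply Measurable.pow_const
      apply Measurable.coe_nnreal_ennreal
      apply Measurable.nnnorm
      exact hv.measurable.comp (((measurable_subtype_coe.comp measurable_snd)).smul
        (measurable_subtype_coe.comp measurable_fst))
    · exact hφ.comp (continuous_subtype_val.comp continuous_snd).measurable
  calc ∫⁻ x : EuclideanSpace ℝ (Fin n), ((‖v x‖₊ : ℝ≥0∞)^2) * φ ‖x‖ ∂μ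
      = ∫⁻ x in ({0}ᶜ : Set (EuclideanSpace ℝ (Fin n))), ((‖v x‖₊ : ℝ≥0∞)^2) * φ ‖x‖ ∂μ := by
        rw [MeasureTheory.restrict_compl_singleton]
    _ = ∫⁻ x : ({0}ᶜ : Set (EuclideanSpace ℝ (Fin n))), ((‖v (x:EuclideanSpace ℝ (Fin n))‖₊ : ℝ≥0∞)^2) * φ ‖(x:EuclideanSpace ℝ (Fin n))‖ ∂(μ.comap Subtype.val) :=
        (lintegral_subtype_comap (measurableSet_singleton _).compl _).symm
    _ = ∫⁻ x : ({0}ᶜ : Set (EuclideanSpace ℝ (Fin n))), G (homeomorphUnitSphereProd (EuclideanSpace ℝ (Fin n)) x) ∂(μ.comap Subtype.val) := by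
        refine lintegral_congr (fun x => ?_)
        have hx : (x:EuclideanSpace ℝ (Fin n)) ≠ 0 := x.2
        simp only [hG, homeomorphUnitSphereProd_apply_fst_coe,
          homeomorphUnitSphereProd_apply_snd_coe]
        rw [smul_smul, mul_inv_cancel₀ (norm_ne_zero_iff.2 hx), one_smul]
    _ = ∫⁻ p, G p ∂(μ.toSphere.prod (Measure.volumeIoiPow (Module.finrank ℝ (EuclideanSpace ℝ (Fin n)) - 1))) :=
        (μ.measurePreserving_homeomorphUnitSphereProd).lintegral_comp_emb
          (Homeomorph.measurableEmbedding _) G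
    _ = ∫⁻ r : Set.Ioi (0:ℝ), (∫⁻ ω : Metric.sphere (0:EuclideanSpace ℝ (Fin n)) 1, G (ω, r) ∂μ.toSphere)
          ∂(Measure.volumeIoiPow (n - 1)) := by
        rw [hdim]
        exact lintegral_prod_symm' G hGmeas
    _ = ∫⁻ r : Set.Ioi (0:ℝ), S (r:ℝ) * φ (r:ℝ) ∂(Measure.volumeIoiPow (n - 1)) := by
        refine lintegral_congr (fun r => ?_)
        simp only [hG]
        rw [lintegral_mul_const]
        apply Measurable.pow_const
        apply Measurable.coe_nnreal_ennreal
        apply Measurable.nnnorm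
        exact hv.measurable.comp (measurable_subtype_coe.const_smul (r:ℝ))
    _ = ∫⁻ r : Set.Ioi (0:ℝ), (fun t : ℝ => ENNReal.ofReal (t ^ (n-1)) * (S t * φ t)) (r:ℝ)
          ∂(Measure.comap Subtype.val volume) := by
        rw [Measure.volumeIoiPow, lintegral_withDensity_eq_lintegral_mul]
        · rfl
        · exact (measurable_subtype_coe.pow_const _).ennreal_ofReal
        · exact ((hSmeas.comp measurable_subtype_coe).mul
            (hφ.comp measurable_subtype_coe))
    _ = ∫⁻ r in Set.Ioi (0:ℝ), ENNReal.ofReal (r ^ (n-1)) * (S r * φ r) :=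
        lintegral_subtype_comap measurableSet_Ioi
          (fun t : ℝ => ENNReal.ofReal (t ^ (n-1)) * (S t * φ t))
    _ = ∫⁻ r in Set.Ioi (0:ℝ), φ r * sphereInt n v r := by
        refine lintegral_congr (fun r => ?_)
        simp only [sphereInt, ← hμ, ← hS]
        ring
section Aux
open Set Metric

variable {n : ℕ}

lemma SK_sphereInt_le (n : ℕ) (v : EuclideanSpace ℝ (Fin n) → ℂ) {r : ℝ} (hr : 0 < r) :
    sphereInt n v r ≤ ENNReal.ofReal (r^2) * Xnorm2 n v := by
  have h : (ENNReal.ofReal (r ^ 2))⁻¹ * sphereInt n v r ≤ Xnorm2 n v :=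
    le_iSup₂ (f := fun (R:ℝ) (_ : R ∈ Set.Ioi (0:ℝ)) =>
      (ENNReal.ofReal (R ^ 2))⁻¹ * sphereInt n v R) r hr
  calc sphereInt n v r
      = ENNReal.ofReal (r^2) * ((ENNReal.ofReal (r^2))⁻¹ * sphereInt n v r) := by
        rw [← mul_assoc, ENNReal.mul_inv_cancel
          ((ENNReal.ofReal_pos.mpr (by positivity)).ne') ENNReal.ofReal_ne_top, one_mul]
    _ ≤ ENNReal.ofReal (r^2) * Xnorm2 n v := mul_le_mul_right h _

lemma SK_ball_le (n : ℕ) (w : EuclideanSpace ℝ (Fin n) → ℂ) {R : ℝ} (hR : 0 < R) :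
    (∫⁻ x in Metric.closedBall (0 : EuclideanSpace ℝ (Fin n)) R, (‖w x‖₊ : ℝ≥0∞) ^ 2)
      ≤ ENNReal.ofReal R * Ynorm2 n w := by
  have h : (ENNReal.ofReal R)⁻¹ *
      (∫⁻ x in Metric.closedBall (0 : EuclideanSpace ℝ (Fin n)) R, (‖w x‖₊ : ℝ≥0∞) ^ 2)
      ≤ Ynorm2 n w :=
    le_iSup₂ (f := fun (R:ℝ) (_ : R ∈ Set.Ioi (0:ℝ)) => (ENNReal.ofReal R)⁻¹ *
      ∫⁻ x in Metric.closedBall (0 : EuclideanSpace ℝ (Fin n)) R, (‖w x‖₊ : ℝ≥0∞) ^ 2) R hR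
  calc (∫⁻ x in Metric.closedBall (0 : EuclideanSpace ℝ (Fin n)) R, (‖w x‖₊ : ℝ≥0∞) ^ 2)
      = ENNReal.ofReal R * ((ENNReal.ofReal R)⁻¹ *
        ∫⁻ x in Metric.closedBall (0 : EuclideanSpace ℝ (Fin n)) R, (‖w x‖₊ : ℝ≥0∞) ^ 2) := by
        rw [← mul_assoc, ENNReal.mul_inv_cancel
          ((ENNReal.ofReal_pos.mpr hR).ne') ENNReal.ofReal_ne_top, one_mul]
    _ ≤ _ := mul_le_mul_right h _

end Aux
section Vlemmas
open Set Metric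

lemma SK_V_small {n : ℕ} (hn : 1 ≤ n) {δ : ℝ} (hδ0 : 0 < δ) (hδ1 : δ < 1)
    (v : EuclideanSpace ℝ (Fin n) → ℂ) (hv : Continuous v) :
    (∫⁻ x in Metric.closedBall (0 : EuclideanSpace ℝ (Fin n)) 1,
        (‖v x‖₊ : ℝ≥0∞) ^ 2 * ENNReal.ofReal (‖x‖ ^ (δ - 3)))
      ≤ ENNReal.ofReal (3 / δ) * Xnorm2 n v := by
  set φ : ℝ → ℝ≥0∞ := (Set.Iic (1:ℝ)).indicator (fun r => ENNReal.ofReal (r ^ (δ - 3))) with hφdef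
  have hφm : Measurable φ := Measurable.indicator (by fun_prop) measurableSet_Iic
  have h1 : (∫⁻ x in Metric.closedBall (0 : EuclideanSpace ℝ (Fin n)) 1,
        (‖v x‖₊ : ℝ≥0∞) ^ 2 * ENNReal.ofReal (‖x‖ ^ (δ - 3)))
      = ∫⁻ x : EuclideanSpace ℝ (Fin n), ((‖v x‖₊ : ℝ≥0∞) ^ 2) * φ ‖x‖ := by
    rw [← lintegral_indicator (measurableSet_closedBall)]
    refine lintegral_congr (fun x => ?_)
    simp only [hφdef, Set.indicator_apply, mem_closedBall_zero_iff, Set.mem_Iic]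
    by_cases hx : ‖x‖ ≤ 1 <;> simp [hx]
  rw [h1, SK_polar n hn v hv φ hφm]
  have h2 : (∫⁻ r in Set.Ioi (0:ℝ), φ r * sphereInt n v r)
      = ∫⁻ r in Set.Ioc (0:ℝ) 1, ENNReal.ofReal (r ^ (δ - 3)) * sphereInt n v r := by
    have : ∀ r, φ r * sphereInt n v r
        = (Set.Iic (1:ℝ)).indicator (fun r => ENNReal.ofReal (r ^ (δ - 3)) * sphereInt n v r) r :=
      fun r => (Set.indicator_mul_left _ _ _).symm
    simp_rw [this]
    rw [lintegral_indicator measurableSet_Iic, Measure.restrict_restrict measurableSet_Iic,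
      Set.inter_comm, Set.Ioi_inter_Iic]
  rw [h2]
  have h3 : (∫⁻ r in Set.Ioc (0:ℝ) 1, ENNReal.ofReal (r ^ (δ - 3)) * sphereInt n v r)
      ≤ ∫⁻ r in Set.Ioc (0:ℝ) 1,
          ENNReal.ofReal (r ^ (δ - 1)) * Xnorm2 n v := by
    refine setLIntegral_mono (by fun_prop) (fun r hr => ?_)
    calc ENNReal.ofReal (r ^ (δ - 3)) * sphereInt n v r
        ≤ ENNReal.ofReal (r ^ (δ - 3)) * (ENNReal.ofReal (r^2) * Xnorm2 n v) :=
          mul_le_mul_right (SK_sphereInt_le n v hr.1) _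
      _ = ENNReal.ofReal (r ^ (δ - 1)) * Xnorm2 n v := by
          rw [← mul_assoc, ← ENNReal.ofReal_mul (Real.rpow_nonneg hr.1.le _)]
          congr 2
          rw [← Real.rpow_natCast r 2, ← Real.rpow_add hr.1, show δ - 3 + (2:ℕ) = δ - 1 by push_cast; ring]
  refine h3.trans ?_
  rw [lintegral_mul_const _ (by fun_prop)]
  exact mul_le_mul_left (SK_int_small hδ0 hδ1) _

lemma SK_V_big {n : ℕ} (hn : 1 ≤ n) {δ : ℝ} (hδ0 : 0 < δ) (hδ1 : δ < 1)
    (v : EuclideanSpace ℝ (Fin n) → ℂ) (hv : Continuous v) :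
    (∫⁻ x in {y : EuclideanSpace ℝ (Fin n) | 1 ≤ ‖y‖},
        (‖v x‖₊ : ℝ≥0∞) ^ 2 * ENNReal.ofReal (‖x‖ ^ (-3 - δ)))
      ≤ ENNReal.ofReal (3 / δ) * Xnorm2 n v := by
  set φ : ℝ → ℝ≥0∞ := (Set.Ici (1:ℝ)).indicator (fun r => ENNReal.ofReal (r ^ (-3 - δ))) with hφdef
  have hφm : Measurable φ := Measurable.indicator (by fun_prop) measurableSet_Ici
  have hsm : MeasurableSet {y : EuclideanSpace ℝ (Fin n) | 1 ≤ ‖y‖} :=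
    measurableSet_le measurable_const measurable_norm
  have h1 : (∫⁻ x in {y : EuclideanSpace ℝ (Fin n) | 1 ≤ ‖y‖},
        (‖v x‖₊ : ℝ≥0∞) ^ 2 * ENNReal.ofReal (‖x‖ ^ (-3 - δ)))
      = ∫⁻ x : EuclideanSpace ℝ (Fin n), ((‖v x‖₊ : ℝ≥0∞) ^ 2) * φ ‖x‖ := by
    rw [← lintegral_indicator hsm]
    refine lintegral_congr (fun x => ?_)
    simp only [hφdef, Set.indicator_apply, Set.mem_setOf_eq, Set.mem_Ici]
    by_cases hx : 1 ≤ ‖x‖ <;> simp [hx]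
  rw [h1, SK_polar n hn v hv φ hφm]
  have h2 : (∫⁻ r in Set.Ioi (0:ℝ), φ r * sphereInt n v r)
      = ∫⁻ r in Set.Ici (1:ℝ), ENNReal.ofReal (r ^ (-3 - δ)) * sphereInt n v r := by
    have : ∀ r, φ r * sphereInt n v r
        = (Set.Ici (1:ℝ)).indicator (fun r => ENNReal.ofReal (r ^ (-3 - δ)) * sphereInt n v r) r :=
      fun r => (Set.indicator_mul_left _ _ _).symm
    simp_rw [this]
    rw [lintegral_indicator measurableSet_Ici, Measure.restrict_restrict measurableSet_Ici,
      show Set.Ici (1:ℝ) ∩ Set.Ioi 0 = Set.Ici 1 from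
        Set.inter_eq_left.mpr (fun r hr => Set.mem_Ioi.mpr (lt_of_lt_of_le one_pos hr))]
  rw [h2]
  have h3 : (∫⁻ r in Set.Ici (1:ℝ), ENNReal.ofReal (r ^ (-3 - δ)) * sphereInt n v r)
      ≤ ∫⁻ r in Set.Ici (1:ℝ), ENNReal.ofReal (r ^ (-1 - δ)) * Xnorm2 n v := by
    refine setLIntegral_mono (by fun_prop) (fun r hr => ?_)
    have hr0 : (0:ℝ) < r := lt_of_lt_of_le one_pos hr
    calc ENNReal.ofReal (r ^ (-3 - δ)) * sphereInt n v r
        ≤ ENNReal.ofReal (r ^ (-3 - δ)) * (ENNReal.ofReal (r^2) * Xnorm2 n v) :=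
          mul_le_mul_right (SK_sphereInt_le n v hr0) _
      _ = ENNReal.ofReal (r ^ (-1 - δ)) * Xnorm2 n v := by
          rw [← mul_assoc, ← ENNReal.ofReal_mul (Real.rpow_nonneg hr0.le _)]
          congr 2
          rw [← Real.rpow_natCast r 2, ← Real.rpow_add hr0, show -3 - δ + (2:ℕ) = -1 - δ by push_cast; ring]
  refine h3.trans ?_
  rw [lintegral_mul_const _ (by fun_prop)]
  exact mul_le_mul_left (SK_int_big hδ0 hδ1) _
end Vlemmas
section Wlemmas
open Set Metric

lemma SK_pow_rpow (t : ℝ) (m : ℕ) : ((2:ℝ)^t)^m = (2:ℝ)^(t*m) := by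
  rw [← Real.rpow_natCast ((2:ℝ)^t) m, ← Real.rpow_mul (by norm_num)]

lemma SK_inv_pow (m : ℕ) : ((2:ℝ)^m)⁻¹ = (2:ℝ)^(-(m:ℝ)) := by
  rw [← Real.rpow_natCast 2 m, ← Real.rpow_neg (by norm_num)]

lemma SK_wsmall_coef {δ : ℝ} (hδ0 : 0 < δ) (j : ℕ) :
    (((2:ℝ)^(j+1))⁻¹) ^ (δ-1) * ((2:ℝ)^j)⁻¹ ≤ 2 * ((2:ℝ)^(-δ))^j := by
  rw [SK_rpow_pow (δ-1) (j+1), SK_pow_rpow, SK_pow_rpow, SK_inv_pow,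
    ← Real.rpow_add (by norm_num),
    show (2:ℝ) * (2:ℝ)^(-δ*(j:ℝ)) = (2:ℝ)^(1 + -δ*(j:ℝ)) by
      rw [Real.rpow_add (by norm_num), Real.rpow_one]]
  apply Real.rpow_le_rpow_of_exponent_le (by norm_num)
  push_cast
  nlinarith

lemma SK_wbig_coef {δ : ℝ} (hδ0 : 0 < δ) (j : ℕ) :
    ((2:ℝ)^j) ^ (-1-δ) * (2:ℝ)^(j+1) ≤ 2 * ((2:ℝ)^(-δ))^j := by
  rw [SK_rpow_pow' (-1-δ) j, SK_pow_rpow, SK_pow_rpow,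
    show ((2:ℝ)^(j+1) : ℝ) = (2:ℝ)^((j:ℝ)+1) by
      rw [← Real.rpow_natCast 2 (j+1)]; push_cast; ring_nf,
    ← Real.rpow_add (by norm_num),
    show (2:ℝ) * (2:ℝ)^(-δ*(j:ℝ)) = (2:ℝ)^(1 + -δ*(j:ℝ)) by
      rw [Real.rpow_add (by norm_num), Real.rpow_one]]
  apply Real.rpow_le_rpow_of_exponent_le (by norm_num)
  nlinarith

lemma SK_W_small {n : ℕ} (hn : 1 ≤ n) {δ : ℝ} (hδ0 : 0 < δ) (hδ1 : δ < 1)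
    (w : EuclideanSpace ℝ (Fin n) → ℂ) (hw : Continuous w) :
    (∫⁻ x in Metric.closedBall (0 : EuclideanSpace ℝ (Fin n)) 1,
        (‖w x‖₊ : ℝ≥0∞) ^ 2 * ENNReal.ofReal (‖x‖ ^ (δ - 1)))
      ≤ ENNReal.ofReal (6 / δ) * Ynorm2 n w := by
  haveI : Nontrivial (EuclideanSpace ℝ (Fin n)) :=
    Module.nontrivial_of_finrank_pos (R := ℝ)
      (by rw [finrank_euclideanSpace_fin]; omega)
  set A : ℕ → Set (EuclideanSpace ℝ (Fin n)) := fun j =>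
    Metric.closedBall 0 (((2:ℝ)^j)⁻¹) \ Metric.closedBall 0 (((2:ℝ)^(j+1))⁻¹) with hA
  have hsub : Metric.closedBall (0 : EuclideanSpace ℝ (Fin n)) 1 ⊆ {0} ∪ ⋃ j, A j := by
    intro x hx
    rcases eq_or_ne x 0 with h | h
    · exact Or.inl h
    · have h0 : 0 < ‖x‖ := norm_pos_iff.mpr h
      obtain ⟨j, hj1, hj2⟩ := SK_small_cover h0 (mem_closedBall_zero_iff.mp hx)
      refine Or.inr (Set.mem_iUnion.mpr ⟨j, ⟨mem_closedBall_zero_iff.mpr hj2, fun hc => ?_⟩⟩)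
      exact absurd (mem_closedBall_zero_iff.mp hc) (not_le.mpr hj1)
  have hterm : ∀ j : ℕ,
      (∫⁻ x in A j, (‖w x‖₊ : ℝ≥0∞) ^ 2 * ENNReal.ofReal (‖x‖ ^ (δ - 1)))
      ≤ ENNReal.ofReal (2 * ((2:ℝ)^(-δ))^j) * Ynorm2 n w := by
    intro j
    have hCpos : (0:ℝ) < ((2:ℝ)^(j+1))⁻¹ := by positivity
    calc (∫⁻ x in A j, (‖w x‖₊ : ℝ≥0∞) ^ 2 * ENNReal.ofReal (‖x‖ ^ (δ - 1)))
        ≤ ∫⁻ x in A j, (‖w x‖₊ : ℝ≥0∞) ^ 2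
            * ENNReal.ofReal ((((2:ℝ)^(j+1))⁻¹) ^ (δ - 1)) := by
          refine setLIntegral_mono (by fun_prop) (fun x hx => ?_)
          refine mul_le_mul_right (ENNReal.ofReal_le_ofReal ?_) _
          have hxl : ((2:ℝ)^(j+1))⁻¹ ≤ ‖x‖ :=
            (not_le.mp (fun hc => hx.2 (mem_closedBall_zero_iff.mpr hc))).le
          exact Real.rpow_le_rpow_of_nonpos hCpos hxl (by linarith)
      _ = (∫⁻ x in A j, (‖w x‖₊ : ℝ≥0∞) ^ 2)
            * ENNReal.ofReal ((((2:ℝ)^(j+1))⁻¹) ^ (δ - 1)) :=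
          lintegral_mul_const _ (by fun_prop)
      _ ≤ (∫⁻ x in Metric.closedBall 0 (((2:ℝ)^j)⁻¹), (‖w x‖₊ : ℝ≥0∞) ^ 2)
            * ENNReal.ofReal ((((2:ℝ)^(j+1))⁻¹) ^ (δ - 1)) :=
          mul_le_mul_left (lintegral_mono_set diff_subset) _
      _ ≤ (ENNReal.ofReal (((2:ℝ)^j)⁻¹) * Ynorm2 n w)
            * ENNReal.ofReal ((((2:ℝ)^(j+1))⁻¹) ^ (δ - 1)) :=
          mul_le_mul_left (SK_ball_le n w (by positivity)) _
      _ = ENNReal.ofReal ((((2:ℝ)^(j+1))⁻¹) ^ (δ - 1) * ((2:ℝ)^j)⁻¹) * Ynorm2 n w := by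
          rw [ENNReal.ofReal_mul (Real.rpow_nonneg hCpos.le _)]
          ring
      _ ≤ ENNReal.ofReal (2 * ((2:ℝ)^(-δ))^j) * Ynorm2 n w :=
          mul_le_mul_left (ENNReal.ofReal_le_ofReal (SK_wsmall_coef hδ0 j)) _
  calc (∫⁻ x in Metric.closedBall (0 : EuclideanSpace ℝ (Fin n)) 1,
        (‖w x‖₊ : ℝ≥0∞) ^ 2 * ENNReal.ofReal (‖x‖ ^ (δ - 1)))
      ≤ ∫⁻ x in ({0} ∪ ⋃ j, A j :
          Set (EuclideanSpace ℝ (Fin n))), (‖w x‖₊ : ℝ≥0∞) ^ 2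
          * ENNReal.ofReal (‖x‖ ^ (δ - 1)) := lintegral_mono_set hsub
    _ ≤ (∫⁻ x in ({0} : Set (EuclideanSpace ℝ (Fin n))), (‖w x‖₊ : ℝ≥0∞) ^ 2
          * ENNReal.ofReal (‖x‖ ^ (δ - 1)))
        + ∫⁻ x in (⋃ j, A j), (‖w x‖₊ : ℝ≥0∞) ^ 2 * ENNReal.ofReal (‖x‖ ^ (δ - 1)) :=
        lintegral_union_le _ _ _
    _ ≤ 0 + ∑' j : ℕ, ∫⁻ x in A j, (‖w x‖₊ : ℝ≥0∞) ^ 2 * ENNReal.ofReal (‖x‖ ^ (δ - 1)) :=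
        add_le_add (le_of_eq (setLIntegral_measure_zero _ _ (measure_singleton 0)))
          (lintegral_iUnion_le _ _)
    _ ≤ ∑' j : ℕ, ENNReal.ofReal (2 * ((2:ℝ)^(-δ))^j) * Ynorm2 n w := by
        rw [zero_add]; exact ENNReal.tsum_le_tsum hterm
    _ ≤ ENNReal.ofReal (6 / δ) * Ynorm2 n w := by
        rw [ENNReal.tsum_mul_right]
        refine mul_le_mul_left ?_ _
        calc ∑' j : ℕ, ENNReal.ofReal (2 * ((2:ℝ)^(-δ))^j)
            = ∑' j : ℕ, ENNReal.ofReal 2 * (ENNReal.ofReal ((2:ℝ)^(-δ)))^j := by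
              refine tsum_congr (fun j => ?_)
              rw [ENNReal.ofReal_mul (by norm_num), ENNReal.ofReal_pow (by positivity)]
          _ = ENNReal.ofReal 2 * ∑' j : ℕ, (ENNReal.ofReal ((2:ℝ)^(-δ)))^j :=
              ENNReal.tsum_mul_left
          _ ≤ ENNReal.ofReal 2 * ENNReal.ofReal (3 / δ) := by
              rw [ENNReal.tsum_geometric]
              exact mul_le_mul_right (SK_geom_le hδ0 hδ1) _
          _ = ENNReal.ofReal (6 / δ) := by
              rw [← ENNReal.ofReal_mul (by norm_num)]
              congr 1
              ring

lemma SK_W_big {n : ℕ} (hn : 1 ≤ n) {δ : ℝ} (hδ0 : 0 < δ) (hδ1 : δ < 1)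
    (w : EuclideanSpace ℝ (Fin n) → ℂ) (hw : Continuous w) :
    (∫⁻ x in {y : EuclideanSpace ℝ (Fin n) | 1 ≤ ‖y‖},
        (‖w x‖₊ : ℝ≥0∞) ^ 2 * ENNReal.ofReal (‖x‖ ^ (-1 - δ)))
      ≤ ENNReal.ofReal (6 / δ) * Ynorm2 n w := by
  set A : ℕ → Set (EuclideanSpace ℝ (Fin n)) := fun j =>
    Metric.ball 0 ((2:ℝ)^(j+1)) \ Metric.ball 0 ((2:ℝ)^j) with hA
  have hsub : {y : EuclideanSpace ℝ (Fin n) | 1 ≤ ‖y‖} ⊆ ⋃ j, A j := by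
    intro x hx
    obtain ⟨j, hj1, hj2⟩ := SK_big_cover hx
    refine Set.mem_iUnion.mpr ⟨j, ⟨mem_ball_zero_iff.mpr hj2, fun hc => ?_⟩⟩
    exact absurd (mem_ball_zero_iff.mp hc) (not_lt.mpr hj1)
  have hterm : ∀ j : ℕ,
      (∫⁻ x in A j, (‖w x‖₊ : ℝ≥0∞) ^ 2 * ENNReal.ofReal (‖x‖ ^ (-1 - δ)))
      ≤ ENNReal.ofReal (2 * ((2:ℝ)^(-δ))^j) * Ynorm2 n w := by
    intro j
    have hCpos : (0:ℝ) < (2:ℝ)^j := by positivity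
    calc (∫⁻ x in A j, (‖w x‖₊ : ℝ≥0∞) ^ 2 * ENNReal.ofReal (‖x‖ ^ (-1 - δ)))
        ≤ ∫⁻ x in A j, (‖w x‖₊ : ℝ≥0∞) ^ 2 * ENNReal.ofReal (((2:ℝ)^j) ^ (-1 - δ)) := by
          refine setLIntegral_mono (by fun_prop) (fun x hx => ?_)
          refine mul_le_mul_right (ENNReal.ofReal_le_ofReal ?_) _
          have hxl : (2:ℝ)^j ≤ ‖x‖ :=
            not_lt.mp (fun hc => hx.2 (mem_ball_zero_iff.mpr hc))
          exact Real.rpow_le_rpow_of_nonpos hCpos hxl (by linarith)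
      _ = (∫⁻ x in A j, (‖w x‖₊ : ℝ≥0∞) ^ 2) * ENNReal.ofReal (((2:ℝ)^j) ^ (-1 - δ)) :=
          lintegral_mul_const _ (by fun_prop)
      _ ≤ (∫⁻ x in Metric.closedBall 0 ((2:ℝ)^(j+1)), (‖w x‖₊ : ℝ≥0∞) ^ 2)
            * ENNReal.ofReal (((2:ℝ)^j) ^ (-1 - δ)) := by
          refine mul_le_mul_left (lintegral_mono_set ?_) _
          exact fun x hx => ball_subset_closedBall hx.1
      _ ≤ (ENNReal.ofReal ((2:ℝ)^(j+1)) * Ynorm2 n w)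
            * ENNReal.ofReal (((2:ℝ)^j) ^ (-1 - δ)) :=
          mul_le_mul_left (SK_ball_le n w (by positivity)) _
      _ = ENNReal.ofReal (((2:ℝ)^j) ^ (-1 - δ) * (2:ℝ)^(j+1)) * Ynorm2 n w := by
          rw [ENNReal.ofReal_mul (Real.rpow_nonneg hCpos.le _)]
          ring
      _ ≤ ENNReal.ofReal (2 * ((2:ℝ)^(-δ))^j) * Ynorm2 n w :=
          mul_le_mul_left (ENNReal.ofReal_le_ofReal (SK_wbig_coef hδ0 j)) _
  calc (∫⁻ x in {y : EuclideanSpace ℝ (Fin n) | 1 ≤ ‖y‖},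
        (‖w x‖₊ : ℝ≥0∞) ^ 2 * ENNReal.ofReal (‖x‖ ^ (-1 - δ)))
      ≤ ∫⁻ x in (⋃ j, A j), (‖w x‖₊ : ℝ≥0∞) ^ 2 * ENNReal.ofReal (‖x‖ ^ (-1 - δ)) :=
        lintegral_mono_set hsub
    _ ≤ ∑' j : ℕ, ∫⁻ x in A j, (‖w x‖₊ : ℝ≥0∞) ^ 2 * ENNReal.ofReal (‖x‖ ^ (-1 - δ)) :=
        lintegral_iUnion_le _ _
    _ ≤ ∑' j : ℕ, ENNReal.ofReal (2 * ((2:ℝ)^(-δ))^j) * Ynorm2 n w :=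
        ENNReal.tsum_le_tsum hterm
    _ ≤ ENNReal.ofReal (6 / δ) * Ynorm2 n w := by
        rw [ENNReal.tsum_mul_right]
        refine mul_le_mul_left ?_ _
        calc ∑' j : ℕ, ENNReal.ofReal (2 * ((2:ℝ)^(-δ))^j)
            = ∑' j : ℕ, ENNReal.ofReal 2 * (ENNReal.ofReal ((2:ℝ)^(-δ)))^j := by
              refine tsum_congr (fun j => ?_)
              rw [ENNReal.ofReal_mul (by norm_num), ENNReal.ofReal_pow (by positivity)]
          _ = ENNReal.ofReal 2 * ∑' j : ℕ, (ENNReal.ofReal ((2:ℝ)^(-δ)))^j :=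
              ENNReal.tsum_mul_left
          _ ≤ ENNReal.ofReal 2 * ENNReal.ofReal (3 / δ) := by
              rw [ENNReal.tsum_geometric]
              exact mul_le_mul_right (SK_geom_le hδ0 hδ1) _
          _ = ENNReal.ofReal (6 / δ) := by
              rw [← ENNReal.ofReal_mul (by norm_num)]
              congr 1
              ring
end Wlemmas
open Set Metric

lemma SK_sq (a : NNReal) {r : ℝ} (hr : 0 ≤ r) (c : ℝ) :
    ((a:ℝ≥0∞) * ENNReal.ofReal (r ^ c)) ^ (2:ℝ)
      = ((a:ℝ≥0∞))^2 * ENNReal.ofReal (r ^ (2*c)) := by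
  rw [ENNReal.mul_rpow_of_nonneg _ _ (by norm_num)]
  congr 1
  · rw [show (2:ℝ) = ((2:ℕ):ℝ) by norm_num, ENNReal.rpow_natCast]
  · rcases eq_or_lt_of_le hr with h | h
    · rcases eq_or_ne c 0 with hc | hc
      · rw [← h, hc, mul_zero, Real.rpow_zero]
        simp
      · rw [← h, Real.zero_rpow hc, Real.zero_rpow (mul_ne_zero two_ne_zero hc)]
        simp
    · rw [ENNReal.ofReal_rpow_of_pos (Real.rpow_pos_of_pos h c)]
      congr 1
      rw [← Real.rpow_mul h.le]
      ring_nf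

lemma SK_split {r : ℝ} (hr : 0 ≤ r) {p a b : ℝ} (hp : p ≠ 0) (ha : a ≠ 0) (hab : a + b = -p) :
    ENNReal.ofReal (1 / r ^ p) = ENNReal.ofReal (r ^ a) * ENNReal.ofReal (r ^ b) := by
  rcases eq_or_lt_of_le hr with h | h
  · rw [← h, Real.zero_rpow hp, Real.zero_rpow ha]
    simp
  · rw [one_div, ← Real.rpow_neg h.le, ← ENNReal.ofReal_mul (Real.rpow_nonneg h.le _),
      ← Real.rpow_add h, hab]

lemma SK_num {δ : ℝ} (h0 : 0 < δ) : 2 * ((3/δ)^((1:ℝ)/2) * (6/δ)^((1:ℝ)/2)) ≤ 9/δ := by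
  rw [← Real.mul_rpow (by positivity) (by positivity),
    show (3/δ) * (6/δ) = 18/δ^2 by field_simp; ring, ← Real.sqrt_eq_rpow]
  have h2 : Real.sqrt (18/δ^2) ≤ Real.sqrt ((4.5/δ)^2) := by
    apply Real.sqrt_le_sqrt
    rw [div_pow]
    apply div_le_div_of_nonneg_right ?_ (by positivity)
    · norm_num
  rw [Real.sqrt_sq (by positivity)] at h2
  calc 2 * Real.sqrt (18/δ^2) ≤ 2 * (4.5/δ) := by linarith
    _ = 9/δ := by ring


end SKaux

/-- For `n ≥ 2`, `0 < δ < 1`, and `v, w` smooth: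
`∫_{|x|≤1} |vw|/|x|^{2−δ} dx + ∫_{|x|≥1} |vw|/|x|^{2+δ} dx ≤ (9/δ) ‖v‖_{Ẋ} ‖w‖_{Ẏ}`. -/
theorem stmt_9 (n : ℕ) (hn : 2 ≤ n) (δ : ℝ) (hδ0 : 0 < δ) (hδ1 : δ < 1)
    (v w : EuclideanSpace ℝ (Fin n) → ℂ) (hv : ContDiff ℝ (⊤ : ℕ∞) v) (hw : ContDiff ℝ (⊤ : ℕ∞) w) :
    (∫⁻ x in Metric.closedBall (0 : EuclideanSpace ℝ (Fin n)) 1,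
        (‖v x‖₊ : ℝ≥0∞) * (‖w x‖₊ : ℝ≥0∞) * ENNReal.ofReal (1 / ‖x‖ ^ (2 - δ)))
      + (∫⁻ x in {y : EuclideanSpace ℝ (Fin n) | 1 ≤ ‖y‖},
          (‖v x‖₊ : ℝ≥0∞) * (‖w x‖₊ : ℝ≥0∞) * ENNReal.ofReal (1 / ‖x‖ ^ (2 + δ)))
      ≤ ENNReal.ofReal (9 / δ) * (Xnorm2 n v) ^ (1 / 2 : ℝ) * (Ynorm2 n w) ^ (1 / 2 : ℝ) := by
  have hn1 : 1 ≤ n := le_trans (by norm_num) hn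
  have hvc : Continuous v := hv.continuous
  have hwc : Continuous w := hw.continuous
  have hconj : Real.HolderConjugate 2 2 := ⟨by norm_num, by norm_num, by norm_num⟩
  have hvm : Measurable (fun x : EuclideanSpace ℝ (Fin n) => ((‖v x‖₊ : ℝ≥0∞))) :=
    hvc.measurable.nnnorm.coe_nnreal_ennreal
  have hwm : Measurable (fun x : EuclideanSpace ℝ (Fin n) => ((‖w x‖₊ : ℝ≥0∞))) :=
    hwc.measurable.nnnorm.coe_nnreal_ennreal
  -- the bound for one region
  have main : ∀ (s : Set (EuclideanSpace ℝ (Fin n))) (p a b : ℝ), MeasurableSet s →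
      p ≠ 0 → a ≠ 0 → a + b = -p →
      (∫⁻ x in s, (‖v x‖₊ : ℝ≥0∞) ^ 2 * ENNReal.ofReal (‖x‖ ^ (2*a)))
        ≤ ENNReal.ofReal (3/δ) * Xnorm2 n v →
      (∫⁻ x in s, (‖w x‖₊ : ℝ≥0∞) ^ 2 * ENNReal.ofReal (‖x‖ ^ (2*b)))
        ≤ ENNReal.ofReal (6/δ) * Ynorm2 n w →
      (∫⁻ x in s, (‖v x‖₊ : ℝ≥0∞) * (‖w x‖₊ : ℝ≥0∞) * ENNReal.ofReal (1 / ‖x‖ ^ p))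
        ≤ (ENNReal.ofReal (3/δ) * Xnorm2 n v) ^ ((1:ℝ)/2)
          * (ENNReal.ofReal (6/δ) * Ynorm2 n w) ^ ((1:ℝ)/2) := by
    intro s p a b hs hp ha hab hV hW
    set f1 : EuclideanSpace ℝ (Fin n) → ℝ≥0∞ :=
      fun x => (‖v x‖₊ : ℝ≥0∞) * ENNReal.ofReal (‖x‖ ^ a) with hf1
    set g1 : EuclideanSpace ℝ (Fin n) → ℝ≥0∞ :=
      fun x => (‖w x‖₊ : ℝ≥0∞) * ENNReal.ofReal (‖x‖ ^ b) with hg1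
    have hsplit : (∫⁻ x in s, (‖v x‖₊ : ℝ≥0∞) * (‖w x‖₊ : ℝ≥0∞)
        * ENNReal.ofReal (1 / ‖x‖ ^ p)) = ∫⁻ x in s, (f1 * g1) x := by
      refine lintegral_congr (fun x => ?_)
      rw [SK_split (norm_nonneg x) hp ha hab]
      simp only [hf1, hg1, Pi.mul_apply]
      ring
    rw [hsplit]
    have hH := ENNReal.lintegral_mul_le_Lp_mul_Lq (volume.restrict s) hconj
      (f := f1) (g := g1) ((hvm.mul (by fun_prop)).aemeasurable)
      ((hwm.mul (by fun_prop)).aemeasurable)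
    refine hH.trans ?_
    have hF : (∫⁻ x in s, f1 x ^ (2:ℝ))
        = ∫⁻ x in s, (‖v x‖₊ : ℝ≥0∞) ^ 2 * ENNReal.ofReal (‖x‖ ^ (2*a)) :=
      lintegral_congr (fun x => SK_sq _ (norm_nonneg x) a)
    have hG : (∫⁻ x in s, g1 x ^ (2:ℝ))
        = ∫⁻ x in s, (‖w x‖₊ : ℝ≥0∞) ^ 2 * ENNReal.ofReal (‖x‖ ^ (2*b)) :=
      lintegral_congr (fun x => SK_sq _ (norm_nonneg x) b)
    rw [hF, hG]
    exact mul_le_mul' (ENNReal.rpow_le_rpow hV (by norm_num))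
      (ENNReal.rpow_le_rpow hW (by norm_num))
  have hin : (∫⁻ x in Metric.closedBall (0 : EuclideanSpace ℝ (Fin n)) 1,
      (‖v x‖₊ : ℝ≥0∞) * (‖w x‖₊ : ℝ≥0∞) * ENNReal.ofReal (1 / ‖x‖ ^ (2 - δ)))
      ≤ (ENNReal.ofReal (3/δ) * Xnorm2 n v) ^ ((1:ℝ)/2)
        * (ENNReal.ofReal (6/δ) * Ynorm2 n w) ^ ((1:ℝ)/2) := by
    refine main _ (2-δ) ((δ-3)/2) ((δ-1)/2) measurableSet_closedBall
      (by intro h; nlinarith) (by intro h; nlinarith) (by ring) ?_ ?_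
    · rw [show 2*((δ-3)/2) = δ - 3 by ring]
      exact SK_V_small hn1 hδ0 hδ1 v hvc
    · rw [show 2*((δ-1)/2) = δ - 1 by ring]
      exact SK_W_small hn1 hδ0 hδ1 w hwc
  have hout : (∫⁻ x in {y : EuclideanSpace ℝ (Fin n) | 1 ≤ ‖y‖},
      (‖v x‖₊ : ℝ≥0∞) * (‖w x‖₊ : ℝ≥0∞) * ENNReal.ofReal (1 / ‖x‖ ^ (2 + δ)))
      ≤ (ENNReal.ofReal (3/δ) * Xnorm2 n v) ^ ((1:ℝ)/2)
        * (ENNReal.ofReal (6/δ) * Ynorm2 n w) ^ ((1:ℝ)/2) := by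
    refine main _ (2+δ) ((-3-δ)/2) ((-1-δ)/2)
      (measurableSet_le measurable_const measurable_norm)
      (by intro h; nlinarith) (by intro h; nlinarith) (by ring) ?_ ?_
    · rw [show 2*((-3-δ)/2) = -3 - δ by ring]
      exact SK_V_big hn1 hδ0 hδ1 v hvc
    · rw [show 2*((-1-δ)/2) = -1 - δ by ring]
      exact SK_W_big hn1 hδ0 hδ1 w hwc
  refine le_trans (add_le_add hin hout) ?_
  have hsplit2 : (ENNReal.ofReal (3/δ) * Xnorm2 n v) ^ ((1:ℝ)/2)
        * (ENNReal.ofReal (6/δ) * Ynorm2 n w) ^ ((1:ℝ)/2)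
      = (ENNReal.ofReal ((3/δ)^((1:ℝ)/2) * (6/δ)^((1:ℝ)/2)))
        * ((Xnorm2 n v) ^ ((1:ℝ)/2) * (Ynorm2 n w) ^ ((1:ℝ)/2)) := by
    rw [ENNReal.mul_rpow_of_nonneg _ _ (by norm_num),
      ENNReal.mul_rpow_of_nonneg _ _ (by norm_num),
      ENNReal.ofReal_rpow_of_pos (by positivity),
      ENNReal.ofReal_rpow_of_pos (by positivity),
      ENNReal.ofReal_mul (by positivity)]
    ring
  rw [hsplit2, ← two_mul, ← mul_assoc, ← mul_assoc,
    show ((2:ℝ≥0∞)) = ENNReal.ofReal 2 by simp,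
    ← ENNReal.ofReal_mul (by norm_num)]
  exact mul_le_mul_left (mul_le_mul_left
    (ENNReal.ofReal_le_ofReal (SK_num hδ0)) _) _
end
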